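/- For every configuration σ ∈ S and every robust configuration η ∈ U, the limit p̂(σ, η) := lim_{κ→∞} p̃^κ(σ, η) exists. Moreover, if η ∈ U(σ) and η ≠ σ, then p̂(σ, η) = Σ_{ω∈Ω(σ,η)} Π_{ℓ=0}^{|ω|−1} 1/|Δ(ω_ℓ)|, where ω_ℓ denotes the ℓ-th configuration of the downhill path ω and |ω| its length (the sum is finite since downhill paths have bounded length, and each |Δ(ω_ℓ)| ≥ 1 for ℓ < |ω|). -/

import Mathlib

/-!
At zero temperature a spin flips only if this does not raise the energy, and because the
neighbour sum is an integer while `0 < h < 1`, such a flip strictly lowers it. A robust `η` is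
absorbing, so `κ ↦ p̃^κ(σ, η)` is monotone, bounded by `1`, and converges; the limit is harmonic
for `p̃`, i.e. `|Δ(σ)| · p̂(σ, η) = Σ_{i ∈ Δ(σ)} p̂(σ^i, η)`. Splitting a downhill path after its
first step shows that the path sum obeys the same recursion, and both equal `[σ = η]` on robust
configurations; induction along the strictly decreasing energy identifies them.
-/

open Filter Topology

namespace IsingS

open scoped Classical

variable (N : ℕ) [NeZero N]

/-- Vertex set: the N×N discrete torus. -/
abbrev V := ZMod N × ZMod N

/-- Configurations: `true` encodes spin +1, `false` encodes spin -1. -/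
abbrev Cfg := V N → Bool

/-- The spin value in ℤ of a Boolean spin. -/
def spin (b : Bool) : ℤ := if b then 1 else -1

/-- The four nearest neighbors of a vertex. -/
def nbrFinset (i : V N) : Finset (V N) :=
  {i + ((1 : ZMod N), (0 : ZMod N)), i + ((-1 : ZMod N), (0 : ZMod N)),
   i + ((0 : ZMod N), (1 : ZMod N)), i + ((0 : ZMod N), (-1 : ZMod N))}

/-- The Hamiltonian with external magnetic field `h`. -/
noncomputable def H (h : ℝ) (σ : Cfg N) : ℝ :=
  -(1/2) * (((∑ i : V N, ∑ j ∈ nbrFinset N i, spin (σ i) * spin (σ j)) : ℤ) : ℝ)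
    - h * (((∑ i : V N, spin (σ i)) : ℤ) : ℝ)

/-- Flip the spin at vertex `i`. -/
def flip (σ : Cfg N) (i : V N) : Cfg N := Function.update σ i (!σ i)

/-- Spin `i` is susceptible in `σ` if flipping it does not increase the energy. -/
def susceptible (h : ℝ) (σ : Cfg N) (i : V N) : Prop :=
  H N h (flip N σ i) ≤ H N h σ

/-- A configuration is robust if it has no susceptible spins. -/
def robust (h : ℝ) (σ : Cfg N) : Prop := ∀ i : V N, ¬ susceptible N h σ i

/-- The set of robust configurations. -/
noncomputable def Uset (h : ℝ) : Finset (Cfg N) :=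
  Finset.univ.filter (fun σ => robust N h σ)

/-- Metropolis rate of flipping spin `i` from `σ` at inverse temperature `β`. -/
noncomputable def metroRate (h β : ℝ) (σ : Cfg N) (i : V N) : ℝ :=
  (1 / (N : ℝ) ^ 2) * min 1 (Real.exp (-β * (H N h (flip N σ i) - H N h σ)))

/-- The Metropolis transition matrix at inverse temperature `β`. -/
noncomputable def pβ (h β : ℝ) (σ η : Cfg N) : ℝ :=
  if η = σ then 1 - ∑ i : V N, metroRate N h β σ i
  else ∑ i ∈ Finset.univ.filter (fun i => flip N σ i = η), metroRate N h β σ i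

/-- The low-temperature dynamics `p̃ = lim_{β→∞} p_β`. -/
noncomputable def ptilde (h : ℝ) (σ η : Cfg N) : ℝ :=
  limUnder atTop (fun β : ℝ => pβ N h β σ η)

/-- The low-temperature dynamics as a matrix. -/
noncomputable def Pmat (h : ℝ) : Matrix (Cfg N) (Cfg N) ℝ :=
  fun σ η => ptilde N h σ η

/-- The set of susceptible spins of `σ`. -/
noncomputable def deltaSet (h : ℝ) (σ : Cfg N) : Finset (V N) :=
  Finset.univ.filter (fun i => susceptible N h σ i)

/-- One downhill step: a single spin flip that does not increase the energy. -/
def stepRel (h : ℝ) (σ η : Cfg N) : Prop :=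
  (∃ i : V N, η = flip N σ i) ∧ H N h η ≤ H N h σ

/-- `l` is a downhill path from `σ` to `η` (encoded as the list of its
configurations `[σ_0, …, σ_ℓ]`). -/
def IsPathBetween (h : ℝ) (σ η : Cfg N) (l : List (Cfg N)) : Prop :=
  l.head? = some σ ∧ l.getLast? = some η ∧ l.Chain' (stepRel N h)

/-- The weight `Π_{ℓ=0}^{|ω|-1} 1/|Δ(ω_ℓ)|` of a downhill path. -/
noncomputable def pathWeight (h : ℝ) (l : List (Cfg N)) : ℝ :=
  (l.dropLast.map (fun τ => ((deltaSet N h τ).card : ℝ)⁻¹)).prod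

end IsingS

namespace Matrix

variable {α : Type*} [Fintype α] [DecidableEq α] {P : Matrix α α ℝ} {η : α}

theorem pow_row_eq_single_of_row_eq_single (hη : P η = Pi.single η 1) (κ : ℕ) :
    (P ^ κ) η = Pi.single η 1 := by
  induction κ with
  | zero => ext τ; simp [one_apply, Pi.single_apply, eq_comm]
  | succ κ ih => ext τ; simp [pow_succ', mul_apply, hη, Pi.single_apply, ih]

theorem monotone_pow_apply_of_row_eq_single (hP : P ∈ rowStochastic ℝ α)
    (hη : P η = Pi.single η 1) (σ : α) : Monotone fun κ : ℕ => (P ^ κ) σ η := by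
  refine monotone_nat_of_le_succ fun κ => ?_
  calc (P ^ κ) σ η = (P ^ κ) σ η * P η η := by simp [hη]
    _ ≤ ∑ τ, (P ^ κ) σ τ * P τ η :=
      Finset.single_le_sum (f := fun τ => (P ^ κ) σ τ * P τ η)
        (fun τ _ => mul_nonneg (nonneg_of_mem_rowStochastic (pow_mem hP κ))
          (nonneg_of_mem_rowStochastic hP)) (Finset.mem_univ η)
    _ = (P ^ (κ + 1)) σ η := by rw [pow_succ, mul_apply]

/-- For absorbing `η`, the probability that the chain started at `σ` is eventually absorbed
at `η`. -/
noncomputable def absorptionProb (P : Matrix α α ℝ) (η σ : α) : ℝ :=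
  ⨆ κ : ℕ, (P ^ κ) σ η

theorem tendsto_pow_apply_absorptionProb (hP : P ∈ rowStochastic ℝ α)
    (hη : P η = Pi.single η 1) (σ : α) :
    Tendsto (fun κ : ℕ => (P ^ κ) σ η) atTop (𝓝 (P.absorptionProb η σ)) :=
  tendsto_atTop_ciSup (monotone_pow_apply_of_row_eq_single hP hη σ)
    ⟨1, by rintro _ ⟨κ, rfl⟩; exact le_one_of_mem_rowStochastic (pow_mem hP κ)⟩

theorem absorptionProb_of_row_eq_single {σ : α} (hσ : P σ = Pi.single σ 1) :
    P.absorptionProb η σ = (Pi.single σ 1 : α → ℝ) η := by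
  simp [absorptionProb, pow_row_eq_single_of_row_eq_single hσ]

theorem mulVec_eq_of_tendsto_pow_apply {L : α → ℝ}
    (hL : ∀ σ, Tendsto (fun κ : ℕ => (P ^ κ) σ η) atTop (𝓝 (L σ))) : P *ᵥ L = L := by
  funext σ
  have hstep : Tendsto (fun κ : ℕ => (P ^ (κ + 1)) σ η) atTop (𝓝 ((P *ᵥ L) σ)) := by
    simp only [pow_succ', mul_apply]
    exact tendsto_finsetSum _ fun τ _ => (hL τ).const_mul _
  exact tendsto_nhds_unique hstep ((hL σ).comp (tendsto_add_atTop_nat 1))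

end Matrix

theorem Finset.sum_sum_nbr_mul_add_single {ι R : Type*} [Fintype ι] [DecidableEq ι] [CommRing R]
    {nbr : ι → Finset ι} (hsymm : ∀ i j, j ∈ nbr i ↔ i ∈ nbr j) {i : ι} (hi : i ∉ nbr i)
    (s : ι → R) (c : R) :
    ∑ k, ∑ j ∈ nbr k, (s + Pi.single i c : ι → R) k * (s + Pi.single i c : ι → R) j
      = ∑ k, ∑ j ∈ nbr k, s k * s j + 2 * c * ∑ j ∈ nbr i, s j := by
  have hswap : ∑ k, ∑ j ∈ nbr k, s k * (Pi.single i c : ι → R) j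
      = ∑ j, ∑ k ∈ nbr j, (Pi.single i c : ι → R) j * s k := by
    rw [Finset.sum_comm' (t' := Finset.univ) (s' := nbr) (by simp [hsymm])]
    simp_rw [mul_comm]
  have hdiag : ∑ k, ∑ j ∈ nbr k, (Pi.single i c : ι → R) k * (Pi.single i c : ι → R) j = 0 := by
    rw [Fintype.sum_eq_single i fun k hk => by simp [hk]]
    simp [Pi.single_apply, hi]
  simp only [Pi.add_apply, add_mul, mul_add, Finset.sum_add_distrib, hswap, hdiag]
  simp [Pi.single_apply, ← Finset.mul_sum]
  ring

theorem tendsto_min_one_exp_neg_mul (c : ℝ) :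
    Tendsto (fun β : ℝ => min 1 (Real.exp (-β * c))) atTop (𝓝 (if c ≤ 0 then 1 else 0)) := by
  split_ifs with hc
  · refine tendsto_const_nhds.congr' ?_
    filter_upwards [eventually_ge_atTop 0] with β hβ
    exact (min_eq_left (Real.one_le_exp (by nlinarith))).symm
  · have hexp : Tendsto (fun β : ℝ => Real.exp (-β * c)) atTop (𝓝 0) :=
      Real.tendsto_exp_atBot.comp <| by
        simpa [neg_mul] using tendsto_id.atTop_mul_const (not_le.1 hc)
    simpa using (tendsto_const_nhds (x := (1 : ℝ))).min hexp

theorem Finite.wellFounded_lt_comp {α β : Type*} [Finite α] [Preorder β] (f : α → β) :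
    WellFounded fun a b : α => f a < f b := by
  have : IsTrans α fun a b => f a < f b := ⟨fun _ _ _ => lt_trans⟩
  have : Std.Irrefl fun a b : α => f a < f b := ⟨fun _ => lt_irrefl _⟩
  exact Finite.wellFounded_of_trans_of_irrefl _

namespace IsingS

open scoped Classical

section Lattice

variable {N : ℕ}

theorem mem_nbrFinset_comm (i j : V N) : j ∈ nbrFinset N i ↔ i ∈ nbrFinset N j := by
  have key : ∀ x : V N, j = i + x ↔ i = j + -x := fun x => by
    constructor <;> rintro rfl <;> abel
  simp only [nbrFinset, Finset.mem_insert, Finset.mem_singleton, key, Prod.neg_mk, neg_neg,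
    neg_zero]
  tauto

theorem self_notMem_nbrFinset (hN : N ≠ 1) (i : V N) : i ∉ nbrFinset N i := by
  have := ZMod.nontrivial_iff.2 hN
  simp [nbrFinset, Prod.ext_iff]

theorem spin_flip_apply (σ : Cfg N) (i j : V N) :
    spin (flip N σ i j) = spin (σ j) + (Pi.single i (-2 * spin (σ i)) : V N → ℤ) j := by
  by_cases hj : j = i
  · subst hj; cases hσ : σ j <;> simp [flip, spin, hσ]
  · simp [flip, hj]

theorem flip_ne (σ : Cfg N) (i : V N) : flip N σ i ≠ σ := fun h => by
  simpa [flip] using congrFun h i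

theorem flip_injective (σ : Cfg N) : Function.Injective (flip N σ) := fun i j h => by
  by_contra hij
  simpa [flip, Function.update_apply, hij] using congrFun h i

end Lattice

section Energy

variable {N : ℕ} [NeZero N] {h : ℝ}

theorem H_flip_sub (hN : N ≠ 1) (σ : Cfg N) (i : V N) :
    H N h (flip N σ i) - H N h σ =
      2 * spin (σ i) * (((∑ j ∈ nbrFinset N i, spin (σ j) : ℤ) : ℝ) + h) := by
  have hpair := Finset.sum_sum_nbr_mul_add_single mem_nbrFinset_comm
    (self_notMem_nbrFinset hN i) (fun j => spin (σ j)) (-2 * spin (σ i))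
  have hfield : ∑ k, spin (flip N σ i k) = ∑ k, spin (σ k) + -2 * spin (σ i) := by
    simp [spin_flip_apply, Finset.sum_add_distrib]
  simp only [Pi.add_apply, ← spin_flip_apply] at hpair
  rw [H, H, hpair, hfield]
  push_cast
  ring

theorem H_flip_ne (hN : N ≠ 1) (hh0 : 0 < h) (hh1 : h < 1) (σ : Cfg N) (i : V N) :
    H N h (flip N σ i) ≠ H N h σ := by
  rw [← sub_ne_zero, H_flip_sub hN]
  have hspin : (spin (σ i) : ℝ) ≠ 0 := by cases σ i <;> simp [spin]
  refine mul_ne_zero (mul_ne_zero two_ne_zero hspin) ?_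
  generalize ∑ j ∈ nbrFinset N i, spin (σ j) = m
  intro hm
  have hneg : (m : ℝ) < 0 := by linarith
  have hgt : (-1 : ℝ) < m := by linarith
  have : m < 0 := by exact_mod_cast hneg
  have : -1 < m := by exact_mod_cast hgt
  omega

theorem H_flip_lt_of_susceptible (hN : N ≠ 1) (hh0 : 0 < h) (hh1 : h < 1) {σ : Cfg N}
    {i : V N} (hi : susceptible N h σ i) : H N h (flip N σ i) < H N h σ :=
  lt_of_le_of_ne hi (H_flip_ne hN hh0 hh1 σ i)

end Energy

section Dynamics

open Finset Matrix

variable {N : ℕ} [NeZero N] {h : ℝ}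

theorem pβ_eq (β : ℝ) (σ τ : Cfg N) :
    pβ N h β σ τ = (if τ = σ then 1 - ∑ i, metroRate N h β σ i else 0)
      + ∑ i with flip N σ i = τ, metroRate N h β σ i := by
  unfold pβ
  split_ifs with hτ
  · subst hτ
    simp [flip_ne]
  · rw [zero_add]

theorem tendsto_sum_metroRate (σ : Cfg N) (s : Finset (V N)) :
    Tendsto (fun β => ∑ i ∈ s, metroRate N h β σ i) atTop
      (𝓝 (#{i ∈ s | susceptible N h σ i} / (N : ℝ) ^ 2)) := by
  have hrate (i : V N) : Tendsto (fun β => metroRate N h β σ i) atTop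
      (𝓝 (1 / (N : ℝ) ^ 2 * if susceptible N h σ i then 1 else 0)) := by
    convert (tendsto_min_one_exp_neg_mul (H N h (flip N σ i) - H N h σ)).const_mul
      (1 / (N : ℝ) ^ 2) using 3
    · rfl
    · exact if_congr sub_nonpos.symm rfl rfl
  convert tendsto_finsetSum s fun i _ => hrate i using 2
  rw [← mul_sum, sum_boole]
  ring

theorem ptilde_eq (σ τ : Cfg N) :
    ptilde N h σ τ = (if τ = σ then 1 - #(deltaSet N h σ) / (N : ℝ) ^ 2 else 0)
      + #{i ∈ deltaSet N h σ | flip N σ i = τ} / (N : ℝ) ^ 2 := by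
  refine Tendsto.limUnder_eq ?_
  simp only [pβ_eq]
  have hflips := tendsto_sum_metroRate (h := h) σ {i | flip N σ i = τ}
  rw [filter_comm] at hflips
  refine Tendsto.add ?_ hflips
  split_ifs
  · exact (tendsto_sum_metroRate σ univ).const_sub 1
  · exact tendsto_const_nhds

theorem Pmat_mulVec_apply (g : Cfg N → ℝ) (σ : Cfg N) :
    (Pmat N h *ᵥ g) σ = (1 - #(deltaSet N h σ) / (N : ℝ) ^ 2) * g σ
      + (∑ i ∈ deltaSet N h σ, g (flip N σ i)) / (N : ℝ) ^ 2 := by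
  have hfibers : ∑ τ, (#{i ∈ deltaSet N h σ | flip N σ i = τ} : ℝ) * g τ
      = ∑ i ∈ deltaSet N h σ, g (flip N σ i) := by
    simp only [← sum_fiberwise' (deltaSet N h σ) (flip N σ) g, sum_const, nsmul_eq_mul]
  simp only [mulVec, dotProduct, Pmat, ptilde_eq, add_mul, sum_add_distrib, ite_mul, zero_mul,
    sum_ite_eq', mem_univ, if_true, ← hfibers, div_mul_eq_mul_div, sum_div]

theorem card_deltaSet_le (σ : Cfg N) : (#(deltaSet N h σ) : ℝ) ≤ (N : ℝ) ^ 2 := by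
  exact_mod_cast (card_le_univ _).trans_eq (by simp [sq])

theorem Pmat_mem_rowStochastic : Pmat N h ∈ rowStochastic ℝ (Cfg N) := by
  have hN : (0 : ℝ) < (N : ℝ) ^ 2 := by have := NeZero.pos N; positivity
  refine mem_rowStochastic.2 ⟨fun σ τ => ?_, funext fun σ => ?_⟩
  · have hσ : 0 ≤ 1 - #(deltaSet N h σ) / (N : ℝ) ^ 2 := by
      rw [sub_nonneg, div_le_one hN]
      exact card_deltaSet_le σ
    rw [Pmat, ptilde_eq]
    split_ifs <;> positivity
  · simp only [Pmat_mulVec_apply, Pi.one_apply, sum_const, nsmul_eq_mul, mul_one]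
    ring

theorem deltaSet_eq_empty_iff {σ : Cfg N} : deltaSet N h σ = ∅ ↔ robust N h σ := by
  simp [deltaSet, robust, filter_eq_empty_iff]

theorem Pmat_row_of_robust {σ : Cfg N} (hσ : robust N h σ) : Pmat N h σ = Pi.single σ 1 := by
  funext τ
  simp [Pmat, ptilde_eq, deltaSet_eq_empty_iff.2 hσ, Pi.single_apply]

end Dynamics

section Harmonic

open Finset Matrix

variable {N : ℕ} [NeZero N] {h : ℝ}

/-- `P f = f` for the low-temperature dynamics, cleared of the holding probability. -/
def IsHarmonic (N : ℕ) [NeZero N] (h : ℝ) (f : Cfg N → ℝ) : Prop :=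
  ∀ σ, (#(deltaSet N h σ) : ℝ) * f σ = ∑ i ∈ deltaSet N h σ, f (flip N σ i)

theorem isHarmonic_of_mulVec_eq {f : Cfg N → ℝ} (hf : Pmat N h *ᵥ f = f) :
    IsHarmonic N h f := fun σ => by
  have hσ := congrFun hf σ
  have hN : (N : ℝ) ≠ 0 := Nat.cast_ne_zero.2 (NeZero.ne N)
  rw [Pmat_mulVec_apply] at hσ
  field_simp at hσ
  linarith

theorem IsHarmonic.eq_of_eqOn_robust (hN : N ≠ 1) (hh0 : 0 < h) (hh1 : h < 1)
    {f g : Cfg N → ℝ} (hf : IsHarmonic N h f) (hg : IsHarmonic N h g)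
    (hfg : ∀ σ, robust N h σ → f σ = g σ) : f = g := by
  funext σ
  induction σ using (Finite.wellFounded_lt_comp (H N h)).induction with
  | _ σ ih =>
  by_cases hσ : robust N h σ
  · exact hfg σ hσ
  have hd : (#(deltaSet N h σ) : ℝ) ≠ 0 := by
    simpa [deltaSet_eq_empty_iff] using hσ
  refine mul_left_cancel₀ hd ?_
  rw [hf σ, hg σ]
  exact sum_congr rfl fun i hi => ih _ (H_flip_lt_of_susceptible hN hh0 hh1 (mem_filter.1 hi).2)

end Harmonic

section Paths

open Finset

variable {N : ℕ} [NeZero N] {h : ℝ}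

theorem isPathBetween_iff {σ η : Cfg N} {l : List (Cfg N)} :
    IsPathBetween N h σ η l ↔ l = [σ] ∧ σ = η ∨
      ∃ i ∈ deltaSet N h σ, ∃ l', IsPathBetween N h (flip N σ i) η l' ∧ l = σ :: l' := by
  constructor
  · rintro ⟨hhead, hlast, hchain⟩
    match l, hhead, hlast, hchain with
    | [a], hhead, hlast, _ => simp_all
    | a :: b :: t, hhead, hlast, hchain =>
      obtain rfl : a = σ := by simpa using hhead
      obtain ⟨⟨⟨i, rfl⟩, hi⟩, hchain⟩ := List.isChain_cons_cons.1 hchain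
      exact .inr ⟨i, mem_filter.2 ⟨mem_univ _, hi⟩, _ :: t,
        ⟨rfl, by simpa using hlast, hchain⟩, rfl⟩
  · rintro (⟨rfl, rfl⟩ | ⟨i, hi, l', ⟨hhead, hlast, hchain⟩, rfl⟩)
    · exact ⟨rfl, rfl, List.isChain_singleton _⟩
    match l', hhead, hlast, hchain with
    | b :: t, hhead, hlast, hchain =>
      obtain rfl : b = flip N σ i := by simpa using hhead
      exact ⟨rfl, by simpa using hlast, List.isChain_cons_cons.2
        ⟨⟨⟨i, rfl⟩, (mem_filter.1 hi).2⟩, hchain⟩⟩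

theorem isPathBetween_of_robust_iff {σ η : Cfg N} (hσ : robust N h σ) {l : List (Cfg N)} :
    IsPathBetween N h σ η l ↔ l = [σ] ∧ σ = η := by
  rw [isPathBetween_iff, deltaSet_eq_empty_iff.2 hσ]
  simp

theorem pathWeight_cons (σ : Cfg N) {l : List (Cfg N)} (hl : l ≠ []) :
    pathWeight N h (σ :: l) = (#(deltaSet N h σ) : ℝ)⁻¹ * pathWeight N h l := by
  simp [pathWeight, List.dropLast_cons_of_ne_nil hl]

theorem finite_setOf_isPathBetween (hN : N ≠ 1) (hh0 : 0 < h) (hh1 : h < 1) (σ η : Cfg N) :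
    {l | IsPathBetween N h σ η l}.Finite := by
  refine (List.finite_length_le _ (Fintype.card (Cfg N))).subset fun l ⟨_, _, hchain⟩ => ?_
  have : Trans (fun a b : Cfg N => H N h b < H N h a) (fun a b => H N h b < H N h a)
      (fun a b => H N h b < H N h a) := ⟨fun hab hbc => hbc.trans hab⟩
  have hdesc : l.Pairwise fun a b => H N h b < H N h a := List.isChain_iff_pairwise.1 <|
    hchain.imp fun _ _ ⟨⟨i, hb⟩, hi⟩ => by subst hb; exact H_flip_lt_of_susceptible hN hh0 hh1 hi
  have hnodup : l.Nodup := hdesc.imp fun hab hEq => by subst hEq; exact lt_irrefl _ hab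
  exact hnodup.length_le_card

variable (hN : N ≠ 1) (hh0 : 0 < h) (hh1 : h < 1)

noncomputable def downhillPaths (σ η : Cfg N) : Finset (List (Cfg N)) :=
  (finite_setOf_isPathBetween hN hh0 hh1 σ η).toFinset

noncomputable def pathSum (η σ : Cfg N) : ℝ :=
  ∑ l ∈ downhillPaths hN hh0 hh1 σ η, pathWeight N h l

variable {hN hh0 hh1}

theorem mem_downhillPaths {σ η : Cfg N} {l : List (Cfg N)} :
    l ∈ downhillPaths hN hh0 hh1 σ η ↔ IsPathBetween N h σ η l :=
  Set.Finite.mem_toFinset _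

theorem tsum_pathWeight_eq_pathSum (σ η : Cfg N) :
    ∑' l : {l // IsPathBetween N h σ η l}, pathWeight N h l.1 = pathSum hN hh0 hh1 η σ := by
  rw [pathSum, ← Finset.tsum_subtype', downhillPaths, Set.Finite.coe_toFinset]
  rfl

theorem downhillPaths_eq_map_biUnion {σ η : Cfg N} (hση : σ ≠ η) :
    downhillPaths hN hh0 hh1 σ η = ((deltaSet N h σ).biUnion fun i =>
      downhillPaths hN hh0 hh1 (flip N σ i) η).map ⟨List.cons σ, List.cons_injective⟩ := by
  ext l
  simp only [Finset.mem_map, mem_biUnion, mem_downhillPaths, Function.Embedding.coeFn_mk]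
  rw [isPathBetween_iff]
  simp only [hση, and_false, false_or]
  constructor
  · rintro ⟨i, hi, l', hl', rfl⟩
    exact ⟨l', ⟨i, hi, hl'⟩, rfl⟩
  · rintro ⟨l', ⟨i, hi, hl'⟩, rfl⟩
    exact ⟨i, hi, l', hl', rfl⟩

theorem pairwiseDisjoint_downhillPaths_flip (σ η : Cfg N) :
    (deltaSet N h σ : Set (V N)).PairwiseDisjoint
      fun i => downhillPaths hN hh0 hh1 (flip N σ i) η := by
  refine fun i _ j _ hij => disjoint_left.2 fun l hi hj => hij (flip_injective σ ?_)
  rw [mem_downhillPaths] at hi hj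
  simpa [hi.1] using hj.1

theorem isHarmonic_pathSum {η : Cfg N} (hη : robust N h η) :
    IsHarmonic N h (pathSum hN hh0 hh1 η) := by
  intro σ
  rcases eq_or_ne σ η with rfl | hση
  · simp [deltaSet_eq_empty_iff.2 hη]
  rcases (deltaSet N h σ).eq_empty_or_nonempty with hΔ | hΔ
  · simp [hΔ]
  have hcons (i : V N) : ∑ l ∈ downhillPaths hN hh0 hh1 (flip N σ i) η, pathWeight N h (σ :: l)
      = (#(deltaSet N h σ) : ℝ)⁻¹ * pathSum hN hh0 hh1 η (flip N σ i) := by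
    rw [pathSum, mul_sum]
    refine sum_congr rfl fun l hl => pathWeight_cons σ ?_
    rintro rfl
    simp [mem_downhillPaths, IsPathBetween] at hl
  rw [pathSum, downhillPaths_eq_map_biUnion hση, sum_map,
    sum_biUnion (pairwiseDisjoint_downhillPaths_flip σ η)]
  simp only [Function.Embedding.coeFn_mk, hcons, ← mul_sum]
  exact mul_inv_cancel_left₀ (by simpa using hΔ.ne_empty) _

theorem pathSum_of_robust {σ η : Cfg N} (hσ : robust N h σ) :
    pathSum hN hh0 hh1 η σ = (Pi.single σ 1 : Cfg N → ℝ) η := by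
  rcases eq_or_ne σ η with rfl | hση
  · have : downhillPaths hN hh0 hh1 σ σ = {[σ]} := by
      ext l; simp [mem_downhillPaths, isPathBetween_of_robust_iff hσ]
    simp [pathSum, this, pathWeight]
  · have : downhillPaths hN hh0 hh1 σ η = ∅ := by
      ext l; simp [mem_downhillPaths, isPathBetween_of_robust_iff hσ, hση]
    simp [pathSum, this, hση.symm]

end Paths

/-- the limit `p̂(σ,η) = lim_κ p̃^κ(σ,η)` exists for robust `η`, and
whenever `η` is a downhill configuration of `σ` different from `σ`, it equals the
sum over all downhill paths from `σ` to `η` of their weights. -/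
theorem phat_exists_and_path_sum (N : ℕ) [NeZero N] (hN : 3 ≤ N)
    (h : ℝ) (hh0 : 0 < h) (hh1 : h < 1)
    (σ η : Cfg N) (hη : robust N h η) :
    (∃ L : ℝ, Tendsto (fun κ : ℕ => (Pmat N h ^ κ) σ η) atTop (𝓝 L)) ∧
    ((η = σ ∨ ∃ l : List (Cfg N), IsPathBetween N h σ η l) → η ≠ σ →
      Tendsto (fun κ : ℕ => (Pmat N h ^ κ) σ η) atTop
        (𝓝 (∑' l : {l : List (Cfg N) // IsPathBetween N h σ η l},
              pathWeight N h l.1))) := by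
  have hN1 : N ≠ 1 := by omega
  have hP : Pmat N h ∈ Matrix.rowStochastic ℝ (Cfg N) := Pmat_mem_rowStochastic
  have habs := Matrix.tendsto_pow_apply_absorptionProb hP (Pmat_row_of_robust hη)
  refine ⟨⟨_, habs σ⟩, fun _ _ => ?_⟩
  have hpathSum : (Pmat N h).absorptionProb η = pathSum hN1 hh0 hh1 η :=
    (isHarmonic_of_mulVec_eq (Matrix.mulVec_eq_of_tendsto_pow_apply habs)).eq_of_eqOn_robust
      hN1 hh0 hh1 (isHarmonic_pathSum hη) fun τ hτ => by
        rw [Matrix.absorptionProb_of_row_eq_single (Pmat_row_of_robust hτ), pathSum_of_robust hτ]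
  rw [tsum_pathWeight_eq_pathSum (hN := hN1) (hh0 := hh0) (hh1 := hh1), ← hpathSum]
  exact habs σ

end IsingS
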